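/- Let α be Diophantine of type (c, γ) with γ ≥ 2, and let φ : ℝ/ℤ → ℂ be a function whose Fourier coefficients satisfy |φ̂(n)| ≤ C|n|^{−r} for all nonzero n, where r > γ − 1/2. Then the series ∑_{n ∈ ℤ \{0}} |φ̂(n)|² / (1 − cos(2παn)) converges. -/

import Mathlib

/-!
Writing `‖x‖` for the distance to the nearest integer, the Diophantine condition gives
`‖nα‖ ≥ c |n|^(1-γ)`, and `1 - cos 2πx ≥ 8 ‖x‖²`. So the denominators are at least
`8c² |n|^(-2(γ-1))` while the numerators are at most `C² |n|^(-2r)`, and the terms are dominated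
by `|n|^(-(2r - 2γ + 2))`, a convergent `p`-series because `r > γ - 1/2`.
-/

open Real

def IsDiophantine (α c γ : ℝ) : Prop :=
  ∀ p q : ℤ, q ≠ 0 → c / |(q : ℝ)| ^ γ ≤ |α - (p : ℝ) / q|

lemma eight_mul_sq_sub_round_le_one_sub_cos (x : ℝ) :
    8 * (x - round x) ^ 2 ≤ 1 - cos (2 * π * x) := by
  set t := x - round x
  have hperiodic : cos (2 * π * x) = cos (2 * π * t) := by
    rw [show 2 * π * x = 2 * π * t + (round x : ℤ) * (2 * π) by ring, cos_add_int_mul_two_pi]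
  have habs : |2 * π * t| ≤ π := by
    rw [abs_mul, abs_of_pos two_pi_pos]
    nlinarith [abs_sub_round x, pi_pos]
  have hcos := cos_le_one_sub_mul_cos_sq habs
  rw [hperiodic]
  calc 8 * t ^ 2 = 2 / π ^ 2 * (2 * π * t) ^ 2 := by field_simp; ring
    _ ≤ 1 - cos (2 * π * t) := by linarith

namespace IsDiophantine

variable {α c γ : ℝ}

lemma mul_rpow_le_abs_mul_sub_round (h : IsDiophantine α c γ) {n : ℤ} (hn : n ≠ 0) :
    c * |(n : ℝ)| ^ (1 - γ) ≤ |α * n - round (α * n)| := by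
  have hpos : 0 < |(n : ℝ)| := by positivity
  calc c * |(n : ℝ)| ^ (1 - γ) = c / |(n : ℝ)| ^ γ * |(n : ℝ)| := by
        rw [rpow_sub hpos, rpow_one]; ring
    _ ≤ |α - (round (α * n) : ℝ) / n| * |(n : ℝ)| :=
        mul_le_mul_of_nonneg_right (h _ n hn) hpos.le
    _ = |α * n - round (α * n)| := by
        rw [← abs_mul, sub_mul, div_mul_cancel₀ _ (by exact_mod_cast hn)]

lemma mul_rpow_le_one_sub_cos (h : IsDiophantine α c γ) (hc : 0 ≤ c) {n : ℤ} (hn : n ≠ 0) :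
    8 * c ^ 2 * |(n : ℝ)| ^ (-(2 * (γ - 1))) ≤ 1 - cos (2 * π * α * n) := by
  have hbound := h.mul_rpow_le_abs_mul_sub_round hn
  have hsq : (c * |(n : ℝ)| ^ (1 - γ)) ^ 2 ≤ (α * n - round (α * n)) ^ 2 := by
    rw [← sq_abs (α * n - _)]
    exact pow_le_pow_left₀ (by positivity) hbound 2
  calc 8 * c ^ 2 * |(n : ℝ)| ^ (-(2 * (γ - 1))) = 8 * (c * |(n : ℝ)| ^ (1 - γ)) ^ 2 := by
        rw [show -(2 * (γ - 1)) = (1 - γ) * (2 : ℕ) by push_cast; ring,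
          rpow_mul_natCast (abs_nonneg _), mul_pow, mul_assoc]
    _ ≤ 8 * (α * n - round (α * n)) ^ 2 := by linarith
    _ ≤ 1 - cos (2 * π * α * n) := by
        rw [mul_assoc (2 * π)]; exact eight_mul_sq_sub_round_le_one_sub_cos _

end IsDiophantine

lemma summable_div_of_le_rpow_of_rpow_le {a d : ℤ → ℝ} {A B s t : ℝ} (hB : 0 < B)
    (hst : t + 1 < s) (ha_nonneg : ∀ n, 0 ≤ a n)
    (ha : ∀ n : ℤ, n ≠ 0 → a n ≤ A * |(n : ℝ)| ^ (-s))
    (hd : ∀ n : ℤ, n ≠ 0 → B * |(n : ℝ)| ^ (-t) ≤ d n) :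
    Summable fun n : {n : ℤ // n ≠ 0} => a n / d n := by
  refine Summable.of_nonneg_of_le
    (f := fun n : {n : ℤ // n ≠ 0} => A / B * |((n : ℤ) : ℝ)| ^ (-(s - t)))
    (fun ⟨n, hn⟩ => div_nonneg (ha_nonneg n) ?_) (fun ⟨n, hn⟩ => ?_)
    (((summable_abs_int_rpow (by linarith)).mul_left _).subtype _)
  · exact (by positivity : 0 ≤ B * |(n : ℝ)| ^ (-t)).trans (hd n hn)
  · have hpos : 0 < |(n : ℝ)| := by positivity
    calc a n / d n ≤ A * |(n : ℝ)| ^ (-s) / (B * |(n : ℝ)| ^ (-t)) :=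
          div_le_div₀ ((ha_nonneg n).trans (ha n hn)) (ha n hn) (by positivity) (hd n hn)
      _ = A / B * |(n : ℝ)| ^ (-(s - t)) := by
          rw [mul_div_mul_comm, ← rpow_sub hpos]; ring_nf

theorem stmt3_general (α c γ r C : ℝ) (hc : 0 < c) (hr : γ - 1/2 < r)
    (hdioph : ∀ p q : ℤ, q ≠ 0 → c / |(q : ℝ)| ^ γ ≤ |α - (p : ℝ) / q|)
    (φ : AddCircle (1 : ℝ) → ℂ)
    (hφ : ∀ n : ℤ, n ≠ 0 →
      ‖fourierCoeff φ n‖ ≤ C * |(n : ℝ)| ^ (-r)) :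
    Summable (fun n : {n : ℤ // n ≠ 0} =>
      ‖fourierCoeff φ (n : ℤ)‖ ^ 2 / (1 - Real.cos (2 * π * α * (n : ℤ)))) := by
  have hcoeff (n : ℤ) (hn : n ≠ 0) : ‖fourierCoeff φ n‖ ^ 2 ≤ C ^ 2 * |(n : ℝ)| ^ (-(2 * r)) :=
    calc ‖fourierCoeff φ n‖ ^ 2 ≤ (C * |(n : ℝ)| ^ (-r)) ^ 2 :=
          pow_le_pow_left₀ (norm_nonneg _) (hφ n hn) 2
      _ = C ^ 2 * |(n : ℝ)| ^ (-(2 * r)) := by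
          rw [show -(2 * r) = -r * (2 : ℕ) by push_cast; ring,
            rpow_mul_natCast (abs_nonneg _), mul_pow]
  exact summable_div_of_le_rpow_of_rpow_le (a := fun n => ‖fourierCoeff φ n‖ ^ 2)
    (d := fun n => 1 - cos (2 * π * α * n)) (by positivity) (by linarith)
    (fun n => by positivity) hcoeff
    (fun n hn => IsDiophantine.mul_rpow_le_one_sub_cos hdioph hc.le hn)

/-- If `α` is Diophantine of type `(c, γ)` (`γ ≥ 2`) and the Fourier coefficients of
`φ : ℝ/ℤ → ℂ` satisfy `|φ̂(n)| ≤ C·|n|^(−r)` with `r > γ − 1/2`, then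
`∑_{n ≠ 0} |φ̂(n)|² / (1 − cos (2παn))` converges. -/
theorem stmt3 (α c γ r C : ℝ) (hc : 0 < c) (hγ : 2 ≤ γ) (hr : γ - 1/2 < r)
    (hdioph : ∀ p q : ℤ, q ≠ 0 → c / |(q : ℝ)| ^ γ ≤ |α - (p : ℝ) / q|)
    (φ : AddCircle (1 : ℝ) → ℂ)
    (hφ : ∀ n : ℤ, n ≠ 0 →
      ‖fourierCoeff φ n‖ ≤ C * |(n : ℝ)| ^ (-r)) :
    Summable (fun n : {n : ℤ // n ≠ 0} =>
      ‖fourierCoeff φ (n : ℤ)‖ ^ 2 / (1 - Real.cos (2 * π * α * (n : ℤ)))) :=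
  stmt3_general α c γ r C hc hr hdioph φ hφ
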